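/- Suppose there exists φ : 𝒳 × 𝒴 → ℝ such that P(X=x | Y=y, S=s) / P(X=x | S=s) = φ(x, y) for all x ∈ 𝒳, y ∈ 𝒴, s ∈ 𝒮, and fix s_max ∈ 𝒮. Define Q̃(ŷ | x, s) := P(Y=ŷ | S=s_max) · φ(x, ŷ). Then Q̃ is a valid conditional distribution (for every (x,s), Q̃(· | x, s) is a probability distribution on 𝒴), and under the joint distribution Q̃ · P_{X,S} the predicted variable Ŷ is independent of S with, for every s ∈ 𝒮 and ŷ ∈ 𝒴: ∑_{x∈𝒳} P(X=x | S=s) · Q̃(ŷ | x, s) = P(Y=ŷ | S=s_max). -/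

import Mathlib

open Finset

noncomputable section

variable {𝒳 𝒴 𝒮 : Type*} [Fintype 𝒳] [Fintype 𝒴] [Fintype 𝒮]

/-- Total variation distance between two finitely supported distributions on `𝒴`,
`TV(p, q) = (1/2) ∑ y, |p y - q y|`. -/
def TV (p q : 𝒴 → ℝ) : ℝ := (1 / 2) * ∑ y, |p y - q y|

/-- Marginal distribution of `(X, S)` under the joint `P` of `(X, Y, S)`. -/
def margXS (P : 𝒳 → 𝒴 → 𝒮 → ℝ) (x : 𝒳) (s : 𝒮) : ℝ := ∑ y, P x y s

/-- Marginal distribution of `(Y, S)`. -/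
def margYS (P : 𝒳 → 𝒴 → 𝒮 → ℝ) (y : 𝒴) (s : 𝒮) : ℝ := ∑ x, P x y s

/-- Marginal distribution of `S`. -/
def margS (P : 𝒳 → 𝒴 → 𝒮 → ℝ) (s : 𝒮) : ℝ := ∑ x, margXS P x s

/-- Marginal distribution of `X`. -/
def margX (P : 𝒳 → 𝒴 → 𝒮 → ℝ) (x : 𝒳) : ℝ := ∑ s, margXS P x s

/-- Conditional distribution of `Y` given `X = x, S = s`. -/
def condYXS (P : 𝒳 → 𝒴 → 𝒮 → ℝ) (x : 𝒳) (s : 𝒮) (y : 𝒴) : ℝ := P x y s / margXS P x s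

/-- Conditional distribution of `Y` given `S = s`. -/
def condYS (P : 𝒳 → 𝒴 → 𝒮 → ℝ) (s : 𝒮) (y : 𝒴) : ℝ := margYS P y s / margS P s

/-- The ratio `P(X=x | Y=y, S=s) / P(X=x | S=s)`. -/
def condRatio (P : 𝒳 → 𝒴 → 𝒮 → ℝ) (x : 𝒳) (y : 𝒴) (s : 𝒮) : ℝ :=
  (P x y s / margYS P y s) / (margXS P x s / margS P s)

/-- A conditional distribution `Q`: for every `(x, s)`, `Q x s` is a probability
distribution on labels. -/
def IsRule (Q : 𝒳 → 𝒮 → 𝒴 → ℝ) : Prop :=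
  (∀ x s y, 0 ≤ Q x s y) ∧ ∀ x s, ∑ y, Q x s y = 1

/-- The generalized objective: `E_{(x,s)∼P_{X,S}}[TV(Q_{Ŷ|X=x,S=s}, P_{Y|X=x,S=s})]`. -/
def objective (P : 𝒳 → 𝒴 → 𝒮 → ℝ) (Q : 𝒳 → 𝒮 → 𝒴 → ℝ) : ℝ :=
  ∑ x, ∑ s, margXS P x s * TV (Q x s) (condYXS P x s)

/-- Joint distribution of `(Ŷ, S)` induced by `Q · P_{X,S}`. -/
def jointYhatS (P : 𝒳 → 𝒴 → 𝒮 → ℝ) (Q : 𝒳 → 𝒮 → 𝒴 → ℝ) (yh : 𝒴) (s : 𝒮) : ℝ :=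
  ∑ x, margXS P x s * Q x s yh

/-- Marginal distribution of the prediction `Ŷ`. -/
def margYhat (P : 𝒳 → 𝒴 → 𝒮 → ℝ) (Q : 𝒳 → 𝒮 → 𝒴 → ℝ) (yh : 𝒴) : ℝ :=
  ∑ s, jointYhatS P Q yh s

/-- Conditional distribution of the prediction `Ŷ` given `S = s`. -/
def condYhatS (P : 𝒳 → 𝒴 → 𝒮 → ℝ) (Q : 𝒳 → 𝒮 → 𝒴 → ℝ) (s : 𝒮) (yh : 𝒴) : ℝ :=
  jointYhatS P Q yh s / margS P s

/-- The conditional distribution `Q̃(ŷ | x, s) := P(Y=ŷ | S=s_max) · φ(x, ŷ)`. -/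
def Qtilde (P : 𝒳 → 𝒴 → 𝒮 → ℝ) (φ : 𝒳 → 𝒴 → ℝ) (smax : 𝒮)
    (x : 𝒳) (s : 𝒮) (yh : 𝒴) : ℝ :=
  condYS P smax yh * φ x yh


/-! Because `φ(x, y) = P(x | y, s) / P(x | s)` for every `s`, Bayes' rule turns `Q̃(ŷ | x, s)`
into `P(ŷ | x, s_max)`, a conditional distribution, and turns `P(x | s) Q̃(ŷ | x, s)` into
`P(ŷ | s_max) P(x | ŷ, s)`, which sums over `x` to `P(ŷ | s_max)`. -/

section Bayes

variable {α β γ : Type*} {P : α → β → γ → ℝ}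

lemma margYS_nonneg [Fintype α] (hP0 : ∀ x y s, 0 ≤ P x y s) (y : β) (s : γ) :
    0 ≤ margYS P y s :=
  sum_nonneg fun x _ => hP0 x y s

lemma margS_nonneg [Fintype α] [Fintype β] (hP0 : ∀ x y s, 0 ≤ P x y s) (s : γ) :
    0 ≤ margS P s :=
  sum_nonneg fun x _ => sum_nonneg fun y _ => hP0 x y s

lemma margS_pos [Fintype α] [Fintype β] [Nonempty α] {s : γ} (hXS : ∀ x, 0 < margXS P x s) :
    0 < margS P s :=
  sum_pos (fun x _ => hXS x) univ_nonempty

lemma condYS_nonneg [Fintype α] [Fintype β] (hP0 : ∀ x y s, 0 ≤ P x y s) (s : γ) (y : β) :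
    0 ≤ condYS P s y :=
  div_nonneg (margYS_nonneg hP0 y s) (margS_nonneg hP0 s)

lemma condRatio_nonneg [Fintype α] [Fintype β] (hP0 : ∀ x y s, 0 ≤ P x y s)
    (x : α) (y : β) (s : γ) : 0 ≤ condRatio P x y s :=
  div_nonneg (div_nonneg (hP0 x y s) (margYS_nonneg hP0 y s))
    (div_nonneg (sum_nonneg fun y _ => hP0 x y s) (margS_nonneg hP0 s))

lemma condYS_mul_condRatio [Fintype α] [Fintype β] {x : α} {y : β} {s : γ}
    (hy : margYS P y s ≠ 0) (hs : margS P s ≠ 0) :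
    condYS P s y * condRatio P x y s = condYXS P x s y := by
  unfold condYS condRatio condYXS
  rcases eq_or_ne (margXS P x s) 0 with hx | hx
  · simp [hx]
  · field_simp

lemma margXS_div_margS_mul_condRatio [Fintype α] [Fintype β] {x : α} {y : β} {s : γ}
    (hx : margXS P x s ≠ 0) (hs : margS P s ≠ 0) :
    margXS P x s / margS P s * condRatio P x y s = P x y s / margYS P y s :=
  mul_div_cancel₀ _ (div_ne_zero hx hs)

lemma sum_condYXS [Fintype β] {x : α} {s : γ} (hx : margXS P x s ≠ 0) :
    ∑ y, condYXS P x s y = 1 := by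
  simp only [condYXS, ← sum_div]
  exact div_self hx

lemma sum_div_margYS [Fintype α] {y : β} {s : γ} (hy : margYS P y s ≠ 0) :
    ∑ x, P x y s / margYS P y s = 1 := by
  rw [← sum_div]
  exact div_self hy

end Bayes

theorem qtilde_valid_and_independent_general
    (P : 𝒳 → 𝒴 → 𝒮 → ℝ)
    (hP0 : ∀ x y s, 0 ≤ P x y s)
    (hXS : ∀ x s, 0 < margXS P x s)
    (hYS : ∀ y s, 0 < margYS P y s)
    (φ : 𝒳 → 𝒴 → ℝ)
    (hφ : ∀ x y s, condRatio P x y s = φ x y)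
    (smax : 𝒮) :
    (∀ x s yh, 0 ≤ Qtilde P φ smax x s yh) ∧
    (∀ x s, ∑ yh, Qtilde P φ smax x s yh = 1) ∧
    (∀ s yh, ∑ x, (margXS P x s / margS P s) * Qtilde P φ smax x s yh
        = condYS P smax yh) := by
  have hS : ∀ x : 𝒳, ∀ s, margS P s ≠ 0 := fun x s =>
    haveI : Nonempty 𝒳 := ⟨x⟩
    (margS_pos (hXS · s)).ne'
  refine ⟨fun x s yh => ?_, fun x s => ?_, fun s yh => ?_⟩
  · rw [Qtilde, ← hφ x yh smax]
    exact mul_nonneg (condYS_nonneg hP0 smax yh) (condRatio_nonneg hP0 x yh smax)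
  · have hQ : ∀ yh, Qtilde P φ smax x s yh = condYXS P x smax yh := fun yh => by
      rw [Qtilde, ← hφ x yh smax, condYS_mul_condRatio (hYS yh smax).ne' (hS x smax)]
    simp only [hQ]
    exact sum_condYXS (hXS x smax).ne'
  · have hterm : ∀ x, margXS P x s / margS P s * Qtilde P φ smax x s yh
        = condYS P smax yh * (P x yh s / margYS P yh s) := fun x => by
      rw [Qtilde, ← hφ x yh s, mul_left_comm,
        margXS_div_margS_mul_condRatio (hXS x s).ne' (hS x s)]
    simp only [hterm, ← mul_sum, sum_div_margYS (hYS yh s).ne', mul_one]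

/-- If the ratio `P(x|y,s)/P(x|s) = φ(x,y)` does not depend on `s`, then
`Q̃(ŷ|x,s) = P(Y=ŷ|S=s_max) φ(x,ŷ)` is a valid conditional distribution, and under the
induced joint `Q̃ · P_{X,S}` the prediction `Ŷ` is independent of `S`, with
`∑_x P(X=x|S=s) Q̃(ŷ|x,s) = P(Y=ŷ|S=s_max)` for every `s, ŷ`. -/
theorem qtilde_valid_and_independent
    (P : 𝒳 → 𝒴 → 𝒮 → ℝ)
    (hP0 : ∀ x y s, 0 ≤ P x y s)
    (hP1 : ∑ x, ∑ y, ∑ s, P x y s = 1)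
    (hXS : ∀ x s, 0 < margXS P x s)
    (hYS : ∀ y s, 0 < margYS P y s)
    (φ : 𝒳 → 𝒴 → ℝ)
    (hφ : ∀ x y s, condRatio P x y s = φ x y)
    (smax : 𝒮) :
    (∀ x s yh, 0 ≤ Qtilde P φ smax x s yh) ∧
    (∀ x s, ∑ yh, Qtilde P φ smax x s yh = 1) ∧
    (∀ s yh, ∑ x, (margXS P x s / margS P s) * Qtilde P φ smax x s yh
        = condYS P smax yh) :=
  qtilde_valid_and_independent_general P hP0 hXS hYS φ hφ smax
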